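/- Let Θ : V_n → W be a ℚ-linear map such that Θ(F_{(C,τ)}) = K_{(Peak(C),τ)} for every standard pair (C,τ). Then Θ(F_{(A,σ)}) = K_{(Peak(A),σ)} for every A ⊆ [n−1] and every permutation σ of [n] (the pair (A,σ) not necessarily standard). -/

import Mathlib

/-- `σ` is a permutation of `[n] = {1,…,n}`: it fixes everything outside `[n]`. -/
def IsPermOn (n : ℕ) (σ : Equiv.Perm ℕ) : Prop :=
  ∀ i, i ∉ Finset.Icc 1 n → σ i = i

/-- The descent set `Des(σ) = {i ∈ [n−1] : σ(i) > σ(i+1)}`. -/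
def DesSet (n : ℕ) (σ : Equiv.Perm ℕ) : Finset ℕ :=
  (Finset.Icc 1 (n - 1)).filter (fun i => σ (i + 1) < σ i)

/-- A standard pair: `A ⊆ [n−1]`, `σ` a permutation of `[n]`, `Des(σ) ⊆ A`. -/
def IsStdPair (n : ℕ) (A : Finset ℕ) (σ : Equiv.Perm ℕ) : Prop :=
  A ⊆ Finset.Icc 1 (n - 1) ∧ IsPermOn n σ ∧ DesSet n σ ⊆ A

/-- `SetComp(A,σ)`. -/
def setCompBlocks (n : ℕ) (A : Finset ℕ) (σ : Equiv.Perm ℕ) : List (Finset ℕ) :=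
  ((0 :: (A.sort (· ≤ ·) ++ [n])).zip (A.sort (· ≤ ·) ++ [n])).map
    (fun p => (Finset.Icc (p.1 + 1) p.2).image (fun x => σ x))

open Classical in
noncomputable def MfunOfComp (φ : List (Finset ℕ)) : (ℕ → ℕ+) → ℚ := fun u =>
  if (∀ j ∈ φ.foldr (· ∪ ·) ∅, ∀ k ∈ φ.foldr (· ∪ ·) ∅,
      ((u j = u k ↔ φ.findIdx (fun B => decide (j ∈ B)) = φ.findIdx (fun B => decide (k ∈ B))) ∧
       (u j < u k ↔ φ.findIdx (fun B => decide (j ∈ B)) < φ.findIdx (fun B => decide (k ∈ B)))))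
  then 1 else 0

/-- The monomial quasisymmetric function in noncommuting variables `M_{(A,σ)}`. -/
noncomputable def Mfun (n : ℕ) (A : Finset ℕ) (σ : Equiv.Perm ℕ) : (ℕ → ℕ+) → ℚ :=
  MfunOfComp (setCompBlocks n A σ)

/-- `𝒜_D`. -/
def AsetChain (n : ℕ) (D : Finset ℕ) : Set (ℕ → ℕ+) :=
  {f | (∀ j, j ∉ Finset.Icc 1 n → f j = 1) ∧
    ∀ i ∈ Finset.Icc 1 (n - 1), f i ≤ f (i + 1) ∧ (i ∈ D → f i < f (i + 1))}

/-- `F_{(D,σ)}(u) = #{f ∈ 𝒜_D : f(σ⁻¹ i) = u i for all i ∈ [n]}`. -/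
noncomputable def Ffun (n : ℕ) (D : Finset ℕ) (σ : Equiv.Perm ℕ) : (ℕ → ℕ+) → ℚ :=
  fun u => (Set.ncard {f ∈ AsetChain n D | ∀ i ∈ Finset.Icc 1 n, f (σ.symm i) = u i} : ℚ)

/-- The enriched order on nonzero integers: `−1 ≺ 1 ≺ −2 ≺ 2 ≺ ⋯`. -/
def enrLT (a b : ℤ) : Prop :=
  a.natAbs < b.natAbs ∨ (a.natAbs = b.natAbs ∧ a < 0 ∧ 0 < b)

/-- `ℬ_D`. -/
def BsetChain (n : ℕ) (D : Finset ℕ) : Set (ℕ → ℤ) :=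
  {f | (∀ j, j ∉ Finset.Icc 1 n → f j = 1) ∧ (∀ i ∈ Finset.Icc 1 n, f i ≠ 0) ∧
    ∀ i ∈ Finset.Icc 1 (n - 1),
      enrLT (f i) (f (i + 1)) ∨ (f i = f (i + 1) ∧ 0 < f i ∧ i ∉ D) ∨
        (f i = f (i + 1) ∧ f i < 0 ∧ i ∈ D)}

/-- `K_{(D,σ)}(u) = #{f ∈ ℬ_D : |f(σ⁻¹ i)| = u i for all i ∈ [n]}`. -/
noncomputable def Kfun (n : ℕ) (D : Finset ℕ) (σ : Equiv.Perm ℕ) : (ℕ → ℕ+) → ℚ :=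
  fun u => (Set.ncard {f ∈ BsetChain n D |
    ∀ i ∈ Finset.Icc 1 n, (f (σ.symm i)).natAbs = (u i : ℕ)} : ℚ)

/-- `Peak(D) = D ∖ ((D+1) ∪ {1})`. -/
def PeakOf (D : Finset ℕ) : Finset ℕ := D \ (D.image (· + 1) ∪ {1})

/-- `V_n = NCQSym_n`: the span of the monomial functions over standard pairs. -/
noncomputable def NCQSymN (n : ℕ) : Submodule ℚ ((ℕ → ℕ+) → ℚ) :=
  Submodule.span ℚ {g | ∃ A σ, IsStdPair n A σ ∧ g = Mfun n A σ}

open scoped Classical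
section Dev
variable {n : ℕ}

lemma permOn_mem {σ : Equiv.Perm ℕ} (hσ : IsPermOn n σ) {j : ℕ} (hj : j ∈ Finset.Icc 1 n) :
    σ j ∈ Finset.Icc 1 n := by
  by_contra h
  have h2 := hσ _ h
  have := σ.injective h2
  rw [this] at h; exact h hj

lemma permOn_symm {σ : Equiv.Perm ℕ} (hσ : IsPermOn n σ) : IsPermOn n σ.symm := by
  intro i hi
  have := hσ _ hi
  conv_lhs => rw [← this]
  exact σ.symm_apply_apply i

lemma Ffun_eq_indicator (hn : 1 ≤ n) {σ : Equiv.Perm ℕ} (hσ : IsPermOn n σ) (A : Finset ℕ)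
    (u : ℕ → ℕ+) :
    Ffun n A σ u = if (∀ i ∈ Finset.Icc 1 (n-1),
        u (σ i) ≤ u (σ (i+1)) ∧ (i ∈ A → u (σ i) < u (σ (i+1)))) then 1 else 0 := by
  classical
  set f₀ : ℕ → ℕ+ := fun j => if j ∈ Finset.Icc 1 n then u (σ j) else 1 with hf₀
  have hmem : ∀ j ∈ Finset.Icc 1 n, ∀ f ∈ {f ∈ AsetChain n A |
      ∀ i ∈ Finset.Icc 1 n, f (σ.symm i) = u i}, f j = u (σ j) := by
    intro j hj f hf
    have hσj := permOn_mem hσ hj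
    have := hf.2 (σ j) hσj
    rwa [σ.symm_apply_apply] at this
  have huniq : ∀ f ∈ {f ∈ AsetChain n A | ∀ i ∈ Finset.Icc 1 n, f (σ.symm i) = u i}, f = f₀ := by
    intro f hf
    funext j
    by_cases hj : j ∈ Finset.Icc 1 n
    · rw [hmem j hj f hf, hf₀]; exact (if_pos hj).symm
    · rw [hf.1.1 j hj, hf₀]; exact (if_neg hj).symm
  have hic : ∀ i ∈ Finset.Icc 1 (n-1), i ∈ Finset.Icc 1 n ∧ i + 1 ∈ Finset.Icc 1 n := by
    intro i hi
    simp only [Finset.mem_Icc] at hi ⊢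
    omega
  simp only [Ffun]
  by_cases hcond : ∀ i ∈ Finset.Icc 1 (n-1),
      u (σ i) ≤ u (σ (i+1)) ∧ (i ∈ A → u (σ i) < u (σ (i+1)))
  · rw [if_pos hcond]
    have hset : {f ∈ AsetChain n A | ∀ i ∈ Finset.Icc 1 n, f (σ.symm i) = u i} = {f₀} := by
      apply Set.eq_singleton_iff_unique_mem.2
      constructor
      · constructor
        · constructor
          · intro j hj; simp only [hf₀]; exact if_neg hj
          · intro i hi
            obtain ⟨h1, h2⟩ := hic i hi
            have e1 : f₀ i = u (σ i) := by simp only [hf₀]; exact if_pos h1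
            have e2 : f₀ (i+1) = u (σ (i+1)) := by simp only [hf₀]; exact if_pos h2
            rw [e1, e2]; exact hcond i hi
        · intro i hi
          have hsi : σ.symm i ∈ Finset.Icc 1 n := permOn_mem (permOn_symm hσ) hi
          simp only [hf₀, hsi, if_pos, σ.apply_symm_apply]
      · exact huniq
    rw [hset, Set.ncard_singleton]; norm_num
  · rw [if_neg hcond]
    have hset : {f ∈ AsetChain n A | ∀ i ∈ Finset.Icc 1 n, f (σ.symm i) = u i} = ∅ := by
      by_contra h
      obtain ⟨f, hf⟩ := Set.nonempty_iff_ne_empty.2 h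
      have hfe := huniq f hf
      apply hcond
      intro i hi
      obtain ⟨h1, h2⟩ := hic i hi
      have := hf.1.2 i hi
      rw [hfe] at this
      have e1 : f₀ i = u (σ i) := by simp only [hf₀]; exact if_pos h1
      have e2 : f₀ (i+1) = u (σ (i+1)) := by simp only [hf₀]; exact if_pos h2
      rwa [e1, e2] at this
    rw [hset]; simp
end Dev
section Dev2
variable {n : ℕ}

lemma permOn_mul_swap {σ : Equiv.Perm ℕ} (hσ : IsPermOn n σ) {i : ℕ}
    (h1 : i ∈ Finset.Icc 1 n) (h2 : i + 1 ∈ Finset.Icc 1 n) :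
    IsPermOn n (σ * Equiv.swap i (i+1)) := by
  intro j hj
  have hji : j ≠ i := fun h => hj (h ▸ h1)
  have hji1 : j ≠ i + 1 := fun h => hj (h ▸ h2)
  rw [Equiv.Perm.mul_apply, Equiv.swap_apply_of_ne_of_ne hji hji1, hσ _ hj]

lemma Ffun_swap (hn : 1 ≤ n) {σ : Equiv.Perm ℕ} (hσ : IsPermOn n σ) {A : Finset ℕ}
    {i : ℕ} (hi : i ∈ Finset.Icc 1 (n-1)) (hiA : i ∉ A) (u : ℕ → ℕ+) :
    Ffun n A σ u + Ffun n (insert i A) (σ * Equiv.swap i (i+1)) u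
      = Ffun n (insert i A) σ u + Ffun n A (σ * Equiv.swap i (i+1)) u := by
  classical
  set τ := σ * Equiv.swap i (i+1) with hτdef
  have hin : i ∈ Finset.Icc 1 n ∧ i + 1 ∈ Finset.Icc 1 n := by
    simp only [Finset.mem_Icc] at hi ⊢; omega
  have hτ : IsPermOn n τ := permOn_mul_swap hσ hin.1 hin.2
  have hti : τ i = σ (i+1) := by
    rw [hτdef, Equiv.Perm.mul_apply, Equiv.swap_apply_left]
  have hti1 : τ (i+1) = σ i := by
    rw [hτdef, Equiv.Perm.mul_apply, Equiv.swap_apply_right]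
  have htj : ∀ j, j ≠ i → j ≠ i + 1 → τ j = σ j := by
    intro j hj1 hj2
    rw [hτdef, Equiv.Perm.mul_apply, Equiv.swap_apply_of_ne_of_ne hj1 hj2]
  rw [Ffun_eq_indicator hn hσ A u, Ffun_eq_indicator hn hσ (insert i A) u,
    Ffun_eq_indicator hn hτ A u, Ffun_eq_indicator hn hτ (insert i A) u]
  set CA : Finset ℕ → Equiv.Perm ℕ → Prop := fun B ρ => ∀ i' ∈ Finset.Icc 1 (n-1),
      u (ρ i') ≤ u (ρ (i'+1)) ∧ (i' ∈ B → u (ρ i') < u (ρ (i'+1))) with hCA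
  rcases lt_trichotomy (u (σ i)) (u (σ (i+1))) with hlt | heq | hgt
  · have h1 : CA A σ ↔ CA (insert i A) σ := by
      constructor
      · intro h i' hi'
        refine ⟨(h i' hi').1, fun hmem => ?_⟩
        rcases Finset.mem_insert.1 hmem with h' | h'
        · rw [h']; exact hlt
        · exact (h i' hi').2 h'
      · intro h i' hi'
        exact ⟨(h i' hi').1, fun hmem => (h i' hi').2 (Finset.mem_insert_of_mem hmem)⟩
    have h2 : ¬ CA A τ := by
      intro h
      have := (h i hi).1
      rw [hti, hti1] at this
      exact absurd (lt_of_le_of_lt this hlt) (lt_irrefl _)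
    have h3 : ¬ CA (insert i A) τ := by
      intro h
      have := (h i hi).1
      rw [hti, hti1] at this
      exact absurd (lt_of_le_of_lt this hlt) (lt_irrefl _)
    simp only [hCA] at h1 h2 h3
    rw [if_neg h2, if_neg h3]
    by_cases hc : ∀ i' ∈ Finset.Icc 1 (n-1),
        u (σ i') ≤ u (σ (i'+1)) ∧ (i' ∈ A → u (σ i') < u (σ (i'+1)))
    · rw [if_pos hc, if_pos (h1.mp hc)]
    · rw [if_neg hc, if_neg (fun h => hc (h1.mpr h))]
  · have hfun : ∀ j, u (τ j) = u (σ j) := by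
      intro j
      by_cases hj1 : j = i
      · rw [hj1, hti, heq]
      · by_cases hj2 : j = i + 1
        · rw [hj2, hti1, heq]
        · rw [htj j hj1 hj2]
    have h1 : CA A τ ↔ CA A σ := by
      simp only [hCA, hfun]
    have h2 : CA (insert i A) τ ↔ CA (insert i A) σ := by
      simp only [hCA, hfun]
    simp only [hCA] at h1 h2
    by_cases ha : ∀ i' ∈ Finset.Icc 1 (n-1),
        u (σ i') ≤ u (σ (i'+1)) ∧ (i' ∈ A → u (σ i') < u (σ (i'+1)))
    · rw [if_pos ha, if_pos (h1.mpr ha)]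
      by_cases hb : ∀ i' ∈ Finset.Icc 1 (n-1),
          u (σ i') ≤ u (σ (i'+1)) ∧ (i' ∈ insert i A → u (σ i') < u (σ (i'+1)))
      · rw [if_pos hb, if_pos (h2.mpr hb)]
      · rw [if_neg hb, if_neg (fun h => hb (h2.mp h))]
        ring
    · rw [if_neg ha, if_neg (fun h => ha (h1.mp h))]
      by_cases hb : ∀ i' ∈ Finset.Icc 1 (n-1),
          u (σ i') ≤ u (σ (i'+1)) ∧ (i' ∈ insert i A → u (σ i') < u (σ (i'+1)))
      · rw [if_pos hb, if_pos (h2.mpr hb)]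
        ring
      · rw [if_neg hb, if_neg (fun h => hb (h2.mp h))]
  · have h1 : CA A τ ↔ CA (insert i A) τ := by
      constructor
      · intro h i' hi'
        refine ⟨(h i' hi').1, fun hmem => ?_⟩
        rcases Finset.mem_insert.1 hmem with h' | h'
        · subst h'; rw [hti, hti1]; exact hgt
        · exact (h i' hi').2 h'
      · intro h i' hi'
        exact ⟨(h i' hi').1, fun hmem => (h i' hi').2 (Finset.mem_insert_of_mem hmem)⟩
    have h2 : ¬ CA A σ := by
      intro h
      have := (h i hi).1
      exact absurd (lt_of_le_of_lt this hgt) (lt_irrefl _)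
    have h3 : ¬ CA (insert i A) σ := by
      intro h
      have := (h i hi).1
      exact absurd (lt_of_le_of_lt this hgt) (lt_irrefl _)
    simp only [hCA] at h1 h2 h3
    rw [if_neg h2, if_neg h3]
    by_cases hc : ∀ i' ∈ Finset.Icc 1 (n-1),
        u (τ i') ≤ u (τ (i'+1)) ∧ (i' ∈ A → u (τ i') < u (τ (i'+1)))
    · rw [if_pos hc, if_pos (h1.mp hc)]
    · rw [if_neg hc, if_neg (fun h => hc (h1.mpr h))]
end Dev2
section Dev3
variable {n : ℕ}

/-- local condition abbreviation -/
def Kcond (D : Finset ℕ) (f : ℕ → ℤ) (j : ℕ) : Prop :=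
  enrLT (f j) (f (j + 1)) ∨ (f j = f (j + 1) ∧ 0 < f j ∧ j ∉ D) ∨
    (f j = f (j + 1) ∧ f j < 0 ∧ j ∈ D)

lemma mem_bset_iff {D : Finset ℕ} {f : ℕ → ℤ} :
    f ∈ BsetChain n D ↔ ((∀ j, j ∉ Finset.Icc 1 n → f j = 1) ∧
      (∀ i ∈ Finset.Icc 1 n, f i ≠ 0) ∧ ∀ i ∈ Finset.Icc 1 (n - 1), Kcond D f i) :=
  Iff.rfl

lemma Kfun_reindex {σ : Equiv.Perm ℕ} (hσ : IsPermOn n σ) (D : Finset ℕ) (u : ℕ → ℕ+) :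
    Kfun n D σ u = Kfun n D 1 (fun j => u (σ j)) := by
  simp only [Kfun]
  congr 1
  apply congrArg
  ext f
  simp only [Set.mem_setOf_eq, Equiv.Perm.one_symm, Equiv.Perm.one_apply, and_congr_right_iff]
  intro _
  constructor
  · intro h j hj
    have := h (σ j) (permOn_mem hσ hj)
    rwa [σ.symm_apply_apply] at this
  · intro h i hi
    have hsi := permOn_mem (permOn_symm hσ) hi
    have := h (σ.symm i) hsi
    rwa [σ.apply_symm_apply] at this

lemma Kfun_zero_of_strict_dec (x : ℕ → ℕ+) {j : ℕ} (hj : j ∈ Finset.Icc 1 (n-1))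
    (hx : (x (j+1) : ℕ) < x j) (D : Finset ℕ) : Kfun n D 1 x = 0 := by
  simp only [Kfun]
  have hset : {f ∈ BsetChain n D |
      ∀ i ∈ Finset.Icc 1 n, (f ((1 : Equiv.Perm ℕ).symm i)).natAbs = (x i : ℕ)} = ∅ := by
    rw [Set.eq_empty_iff_forall_notMem]
    rintro f ⟨hf, habs⟩
    simp only [Equiv.Perm.one_symm, Equiv.Perm.one_apply] at habs
    have hj1 : j ∈ Finset.Icc 1 n := by simp only [Finset.mem_Icc] at hj ⊢; omega
    have hj2 : j + 1 ∈ Finset.Icc 1 n := by simp only [Finset.mem_Icc] at hj ⊢; omega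
    have e1 := habs j hj1
    have e2 := habs (j+1) hj2
    have := hf.2.2 j hj
    rcases this with h | h | h
    · rcases h with h | h <;> omega
    · rw [h.1] at e1; omega
    · rw [h.1] at e1; omega
  rw [hset]
  simp

lemma Kfun_congr_D {x : ℕ → ℕ+} {D E : Finset ℕ}
    (h : ∀ j ∈ Finset.Icc 1 (n-1), ((j ∈ D) ↔ (j ∈ E)) ∨ x j ≠ x (j+1)) :
    Kfun n D 1 x = Kfun n E 1 x := by
  simp only [Kfun]
  congr 1
  apply congrArg
  ext f
  simp only [Set.mem_setOf_eq, Equiv.Perm.one_symm, Equiv.Perm.one_apply]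
  have key : ∀ (D' E' : Finset ℕ), (∀ j ∈ Finset.Icc 1 (n-1), ((j ∈ D') ↔ (j ∈ E')) ∨ x j ≠ x (j+1)) →
      f ∈ BsetChain n D' → (∀ i ∈ Finset.Icc 1 n, (f i).natAbs = (x i : ℕ)) →
      f ∈ BsetChain n E' := by
    intro D' E' hDE hf habs
    refine ⟨hf.1, hf.2.1, ?_⟩
    intro j hj
    have hj1 : j ∈ Finset.Icc 1 n := by simp only [Finset.mem_Icc] at hj ⊢; omega
    have hj2 : j + 1 ∈ Finset.Icc 1 n := by simp only [Finset.mem_Icc] at hj ⊢; omega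
    have hc := hf.2.2 j hj
    rcases hDE j hj with hmem | hne
    · rcases hc with h' | h' | h'
      · exact Or.inl h'
      · exact Or.inr (Or.inl ⟨h'.1, h'.2.1, fun hE => h'.2.2 (hmem.mpr hE)⟩)
      · exact Or.inr (Or.inr ⟨h'.1, h'.2.1, hmem.mp h'.2.2⟩)
    · have hfne : f j ≠ f (j+1) := by
        intro heq
        apply hne
        have e1 := habs j hj1
        have e2 := habs (j+1) hj2
        have : (x j : ℕ) = (x (j+1) : ℕ) := by rw [← e1, ← e2, heq]
        exact PNat.coe_injective this
      rcases hc with h' | h' | h'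
      · exact Or.inl h'
      · exact absurd h'.1 hfne
      · exact absurd h'.1 hfne
  constructor
  · rintro ⟨hf, habs⟩; exact ⟨key D E h hf habs, habs⟩
  · rintro ⟨hf, habs⟩
    refine ⟨key E D (fun j hj => ?_) hf habs, habs⟩
    rcases h j hj with h' | h'
    · exact Or.inl h'.symm
    · exact Or.inr h'
end Dev3
section Dev4
variable {n : ℕ}

lemma Kfun_erase_peak {x : ℕ → ℕ+} {D : Finset ℕ} {i : ℕ}
    (hi : i ∈ Finset.Icc 1 (n-1)) (hi1 : i + 1 ∈ Finset.Icc 1 (n-1))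
    (hlt : (x i : ℕ) < x (i+1)) (heq : x (i+1) = x (i+2))
    (hD1 : i + 1 ∈ D) (hD2 : i + 2 ∉ D) :
    Kfun n D 1 x = Kfun n (D.erase (i+1)) 1 x := by
  classical
  simp only [Kfun]
  set S : Finset ℕ → Set (ℕ → ℤ) := fun D' => {f ∈ BsetChain n D' |
      ∀ j ∈ Finset.Icc 1 n, (f ((1 : Equiv.Perm ℕ).symm j)).natAbs = (x j : ℕ)} with hS
  have hSmem : ∀ (D' : Finset ℕ) (f : ℕ → ℤ), f ∈ S D' ↔ (f ∈ BsetChain n D' ∧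
      ∀ j ∈ Finset.Icc 1 n, (f j).natAbs = (x j : ℕ)) := by
    intro D' f
    simp only [hS, Set.mem_setOf_eq, Equiv.Perm.one_symm, Equiv.Perm.one_apply]
  have hmi : i ∈ Finset.Icc 1 n := by simp only [Finset.mem_Icc] at hi ⊢; omega
  have hmi1 : i + 1 ∈ Finset.Icc 1 n := by simp only [Finset.mem_Icc] at hi ⊢; omega
  have hmi2 : i + 2 ∈ Finset.Icc 1 n := by simp only [Finset.mem_Icc] at hi1 ⊢; omega
  have hx12 : (x (i+1) : ℕ) = (x (i+2) : ℕ) := by rw [heq]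
  have n11 : i + 1 + 1 = i + 2 := by omega
  have n21 : i + 2 + 1 = i + 3 := by omega
  -- the two flips
  set φ : (ℕ → ℤ) → (ℕ → ℤ) := fun f => if f (i+2) < 0
    then Function.update f (i+2) (-(f (i+2))) else Function.update f (i+1) (-(f (i+1))) with hφ
  set ψ : (ℕ → ℤ) → (ℕ → ℤ) := fun f => if f (i+1) < 0
    then Function.update f (i+2) (-(f (i+2))) else Function.update f (i+1) (-(f (i+1))) with hψ
  -- basic consequences for f ∈ S D
  have hflip_mem : ∀ (D' : Finset ℕ) (f : ℕ → ℤ) (p : ℕ), p ∈ Finset.Icc 1 n →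
      f ∈ S D' → ((∀ j, j ∉ Finset.Icc 1 n → Function.update f p (-(f p)) j = 1) ∧
        (∀ j ∈ Finset.Icc 1 n, Function.update f p (-(f p)) j ≠ 0) ∧
        (∀ j ∈ Finset.Icc 1 n, (Function.update f p (-(f p)) j).natAbs = (x j : ℕ))) := by
    intro D' f p hp hf
    rw [hSmem] at hf
    refine ⟨?_, ?_, ?_⟩
    · intro j hj
      rw [Function.update_of_ne (fun h => hj (by rw [h]; exact hp))]
      exact hf.1.1 j hj
    · intro j hj
      by_cases hjp : j = p
      · subst hjp
        rw [Function.update_self]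
        simpa using hf.1.2.1 j hj
      · rw [Function.update_of_ne hjp]
        exact hf.1.2.1 j hj
    · intro j hj
      by_cases hjp : j = p
      · subst hjp
        rw [Function.update_self, Int.natAbs_neg]
        exact hf.2 j hj
      · rw [Function.update_of_ne hjp]
        exact hf.2 j hj
  -- f ∈ S D: f (i+1) < 0
  have hneg1 : ∀ f ∈ S D, f (i+1) < 0 := by
    intro f hf
    rw [hSmem] at hf
    have hc := hf.1.2.2 (i+1) hi1
    rw [n11] at hc
    have e1 := hf.2 (i+1) hmi1
    have e2 := hf.2 (i+2) hmi2
    rcases hc with h | h | h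
    · rcases h with h | h
      · omega
      · exact h.2.1
    · exact absurd hD1 h.2.2
    · exact h.2.1
  -- f ∈ S D₀: f (i+2) > 0
  have hpos2 : ∀ f ∈ S (D.erase (i+1)), 0 < f (i+2) := by
    intro f hf
    rw [hSmem] at hf
    have hc := hf.1.2.2 (i+1) hi1
    rw [n11] at hc
    have e1 := hf.2 (i+1) hmi1
    have e2 := hf.2 (i+2) hmi2
    rcases hc with h | h | h
    · rcases h with h | h
      · omega
      · exact h.2.2
    · rw [← h.1]; exact h.2.1
    · exact absurd h.2.2 (by simp)
  -- well-definedness of φ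
  have hφwd : ∀ f ∈ S D, φ f ∈ S (D.erase (i+1)) := by
    intro f hf
    have hfS := hf
    rw [hSmem] at hfS
    obtain ⟨⟨hout, hnz, hcond⟩, habs⟩ := hfS
    have h1 := hneg1 f hf
    have e1 := habs (i+1) hmi1
    have e2 := habs (i+2) hmi2
    have hnz2 : f (i+2) ≠ 0 := hnz (i+2) hmi2
    by_cases hsgn : f (i+2) < 0
    · -- flip at i+2 ; here f(i+1) = f(i+2) < 0
      have hBcase : f (i+1) = f (i+2) := by
        have hc := hcond (i+1) hi1
        rw [n11] at hc
        rcases hc with h | h | h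
        · rcases h with h | h
          · omega
          · omega
        · exact h.1
        · exact h.1
      have hφf : φ f = Function.update f (i+2) (-(f (i+2))) := by
        rw [hφ]; simp only [if_pos hsgn]
      set g := Function.update f (i+2) (-(f (i+2))) with hg
      have hbasic := hflip_mem D f (i+2) hmi2 hf
      have hg1 : g (i+1) = f (i+1) := Function.update_of_ne (by omega) _ _
      have hg2 : g (i+2) = -(f (i+2)) := Function.update_self _ _ _
      have hgj : ∀ j, j ≠ i + 2 → g j = f j := fun j hj => Function.update_of_ne hj _ _
      rw [hφf, hSmem]
      refine ⟨⟨hbasic.1, hbasic.2.1, ?_⟩, hbasic.2.2⟩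
      intro j hj
      by_cases hj1 : j = i + 1
      · subst hj1
        rw [n11]
        left
        right
        rw [hg1, hg2]
        refine ⟨by omega, h1, by omega⟩
      · by_cases hj2 : j = i + 2
        · subst hj2
          have hc := hcond (i+2) hj
          rw [n21] at hc
          have hmi3 : i + 3 ∈ Finset.Icc 1 n := by
            simp only [Finset.mem_Icc] at hj ⊢; omega
          have hg3 : g (i+3) = f (i+3) := hgj _ (by omega)
          rw [n21]
          rcases hc with h | h | h
          · rcases h with h | h
            · left; left; rw [hg2, hg3]; simpa [Int.natAbs_neg] using h
            · -- natAbs eq, f(i+2)<0<f(i+3): g(i+2) = f (i+3) > 0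
              right; left
              rw [hg2, hg3]
              have : -(f (i+2)) = f (i+3) := by omega
              refine ⟨this, by omega, ?_⟩
              intro hmem
              exact hD2 (Finset.mem_of_mem_erase hmem)
          · omega
          · exact absurd h.2.2 hD2
        · -- untouched adjacency
          have hgja : g j = f j := hgj j (by omega)
          have hgjb : g (j+1) = f (j+1) := hgj _ (by omega)
          have hc := hcond j hj
          rw [hgja, hgjb]
          rcases hc with h | h | h
          · exact Or.inl h
          · exact Or.inr (Or.inl ⟨h.1, h.2.1, fun hm => h.2.2 (Finset.mem_of_mem_erase hm)⟩)
          · exact Or.inr (Or.inr ⟨h.1, h.2.1, Finset.mem_erase.2 ⟨hj1, h.2.2⟩⟩)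
    · -- flip at i+1 ; here f (i+2) > 0
      have hpos : 0 < f (i+2) := by omega
      have hφf : φ f = Function.update f (i+1) (-(f (i+1))) := by
        rw [hφ]; simp only [if_neg hsgn]
      set g := Function.update f (i+1) (-(f (i+1))) with hg
      have hbasic := hflip_mem D f (i+1) hmi1 hf
      have hg1 : g (i+1) = -(f (i+1)) := Function.update_self _ _ _
      have hgj : ∀ j, j ≠ i + 1 → g j = f j := fun j hj => Function.update_of_ne hj _ _
      rw [hφf, hSmem]
      refine ⟨⟨hbasic.1, hbasic.2.1, ?_⟩, hbasic.2.2⟩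
      intro j hj
      by_cases hj0 : j = i
      · rw [hj0]
        left; left
        rw [hgj i (by omega), hg1]
        have e0 := habs i hmi
        rw [Int.natAbs_neg]
        omega
      · by_cases hj1 : j = i + 1
        · subst hj1
          rw [n11]
          right; left
          rw [hg1, hgj (i+2) (by omega)]
          refine ⟨by omega, by omega, Finset.notMem_erase _ _⟩
        · have hgja : g j = f j := hgj j hj1
          have hgjb : g (j+1) = f (j+1) := hgj _ (by omega)
          have hc := hcond j hj
          rw [hgja, hgjb]
          rcases hc with h | h | h
          · exact Or.inl h
          · exact Or.inr (Or.inl ⟨h.1, h.2.1, fun hm => h.2.2 (Finset.mem_of_mem_erase hm)⟩)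
          · exact Or.inr (Or.inr ⟨h.1, h.2.1, Finset.mem_erase.2 ⟨hj1, h.2.2⟩⟩)
  -- well-definedness of ψ
  have hψwd : ∀ f ∈ S (D.erase (i+1)), ψ f ∈ S D := by
    intro f hf
    have hfS := hf
    rw [hSmem] at hfS
    obtain ⟨⟨hout, hnz, hcond⟩, habs⟩ := hfS
    have h2 := hpos2 f hf
    have e1 := habs (i+1) hmi1
    have e2 := habs (i+2) hmi2
    have hnz1 : f (i+1) ≠ 0 := hnz (i+1) hmi1
    by_cases hsgn : f (i+1) < 0
    · -- flip at i+2
      have hψf : ψ f = Function.update f (i+2) (-(f (i+2))) := by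
        rw [hψ]; simp only [if_pos hsgn]
      set g := Function.update f (i+2) (-(f (i+2))) with hg
      have hbasic := hflip_mem (D.erase (i+1)) f (i+2) hmi2 hf
      have hg1 : g (i+1) = f (i+1) := Function.update_of_ne (by omega) _ _
      have hg2 : g (i+2) = -(f (i+2)) := Function.update_self _ _ _
      have hgj : ∀ j, j ≠ i + 2 → g j = f j := fun j hj => Function.update_of_ne hj _ _
      rw [hψf, hSmem]
      refine ⟨⟨hbasic.1, hbasic.2.1, ?_⟩, hbasic.2.2⟩
      intro j hj
      by_cases hj1 : j = i + 1
      · subst hj1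
        rw [n11]
        right; right
        rw [hg1, hg2]
        exact ⟨by omega, hsgn, hD1⟩
      · by_cases hj2 : j = i + 2
        · subst hj2
          have hc := hcond (i+2) hj
          rw [n21] at hc
          have hmi3 : i + 3 ∈ Finset.Icc 1 n := by
            simp only [Finset.mem_Icc] at hj ⊢; omega
          have hg3 : g (i+3) = f (i+3) := hgj _ (by omega)
          rw [n21]
          rcases hc with h | h | h
          · rcases h with h | h
            · left; left; rw [hg2, hg3]; simpa [Int.natAbs_neg] using h
            · omega
          · -- f(i+2) = f(i+3) > 0 : g(i+2) = -f(i+3) : enrLT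
            left; right
            rw [hg2, hg3]
            refine ⟨by rw [Int.natAbs_neg, h.1], by omega, by omega⟩
          · omega
        · have hgja : g j = f j := hgj j (by omega)
          have hgjb : g (j+1) = f (j+1) := hgj _ (by omega)
          have hc := hcond j hj
          rw [hgja, hgjb]
          rcases hc with h | h | h
          · exact Or.inl h
          · exact Or.inr (Or.inl ⟨h.1, h.2.1, fun hm => h.2.2 (Finset.mem_erase.2 ⟨hj1, hm⟩)⟩)
          · exact Or.inr (Or.inr ⟨h.1, h.2.1, Finset.mem_of_mem_erase h.2.2⟩)
    · -- f(i+1) > 0, so f(i+1) = f(i+2) > 0; flip at i+1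
      have hpos1 : 0 < f (i+1) := by omega
      have hAcase : f (i+1) = f (i+2) := by
        have hc := hcond (i+1) hi1
        rw [n11] at hc
        rcases hc with h | h | h
        · rcases h with h | h
          · omega
          · omega
        · exact h.1
        · omega
      have hψf : ψ f = Function.update f (i+1) (-(f (i+1))) := by
        rw [hψ]; simp only [if_neg hsgn]
      set g := Function.update f (i+1) (-(f (i+1))) with hg
      have hbasic := hflip_mem (D.erase (i+1)) f (i+1) hmi1 hf
      have hg1 : g (i+1) = -(f (i+1)) := Function.update_self _ _ _
      have hgj : ∀ j, j ≠ i + 1 → g j = f j := fun j hj => Function.update_of_ne hj _ _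
      rw [hψf, hSmem]
      refine ⟨⟨hbasic.1, hbasic.2.1, ?_⟩, hbasic.2.2⟩
      intro j hj
      by_cases hj0 : j = i
      · rw [hj0]
        left; left
        rw [hgj i (by omega), hg1]
        have e0 := habs i hmi
        rw [Int.natAbs_neg]
        omega
      · by_cases hj1 : j = i + 1
        · subst hj1
          rw [n11]
          left; right
          rw [hg1, hgj (i+2) (by omega)]
          refine ⟨by rw [Int.natAbs_neg]; omega, by omega, by omega⟩
        · have hgja : g j = f j := hgj j hj1
          have hgjb : g (j+1) = f (j+1) := hgj _ (by omega)
          have hc := hcond j hj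
          rw [hgja, hgjb]
          rcases hc with h | h | h
          · exact Or.inl h
          · exact Or.inr (Or.inl ⟨h.1, h.2.1, fun hm => h.2.2 (Finset.mem_erase.2 ⟨hj1, hm⟩)⟩)
          · exact Or.inr (Or.inr ⟨h.1, h.2.1, Finset.mem_of_mem_erase h.2.2⟩)
  -- ψ ∘ φ = id on S D
  have hflipflip : ∀ (f : ℕ → ℤ) (p : ℕ),
      Function.update (Function.update f p (-(f p))) p
        (-(Function.update f p (-(f p)) p)) = f := by
    intro f p
    rw [Function.update_self, neg_neg, Function.update_idem, Function.update_eq_self]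
  have hψφ : ∀ f ∈ S D, ψ (φ f) = f := by
    intro f hf
    have h1 := hneg1 f hf
    by_cases hsgn : f (i+2) < 0
    · have hφf : φ f = Function.update f (i+2) (-(f (i+2))) := by
        rw [hφ]; simp only [if_pos hsgn]
      have hv : (φ f) (i+1) = f (i+1) := by
        rw [hφf]; exact Function.update_of_ne (by omega) _ _
      rw [hψ]
      simp only [hv, if_pos h1]
      rw [hφf, hflipflip]
    · have hφf : φ f = Function.update f (i+1) (-(f (i+1))) := by
        rw [hφ]; simp only [if_neg hsgn]
      have hv : (φ f) (i+1) = -(f (i+1)) := by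
        rw [hφf]; exact Function.update_self _ _ _
      rw [hψ]
      have : ¬ ((φ f) (i+1) < 0) := by rw [hv]; omega
      simp only [if_neg this]
      rw [hφf, hflipflip]
  have hφψ : ∀ f ∈ S (D.erase (i+1)), φ (ψ f) = f := by
    intro f hf
    have h2 := hpos2 f hf
    by_cases hsgn : f (i+1) < 0
    · have hψf : ψ f = Function.update f (i+2) (-(f (i+2))) := by
        rw [hψ]; simp only [if_pos hsgn]
      have hv : (ψ f) (i+2) = -(f (i+2)) := by
        rw [hψf]; exact Function.update_self _ _ _
      rw [hφ]
      have : (ψ f) (i+2) < 0 := by rw [hv]; omega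
      simp only [if_pos this]
      rw [hψf, hflipflip]
    · have hψf : ψ f = Function.update f (i+1) (-(f (i+1))) := by
        rw [hψ]; simp only [if_neg hsgn]
      have hv : (ψ f) (i+2) = f (i+2) := by
        rw [hψf]; exact Function.update_of_ne (by omega) _ _
      rw [hφ]
      have : ¬ ((ψ f) (i+2) < 0) := by rw [hv]; omega
      simp only [if_neg this]
      rw [hψf, hflipflip]
  -- conclude
  have himg : φ '' (S D) = S (D.erase (i+1)) := by
    apply Set.Subset.antisymm
    · rintro g ⟨f, hf, rfl⟩
      exact hφwd f hf
    · intro g hg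
      exact ⟨ψ g, hψwd g hg, hφψ g hg⟩
  have hinj : Set.InjOn φ (S D) := by
    intro f1 h1' f2 h2' heq'
    have := congrArg ψ heq'
    rwa [hψφ f1 h1', hψφ f2 h2'] at this
  show ((S D).ncard : ℚ) = ((S (D.erase (i+1))).ncard : ℚ)
  rw [← himg, Set.ncard_image_of_injOn hinj]
end Dev4
section Dev5
variable {n : ℕ}

lemma mem_peakOf {A : Finset ℕ} {j : ℕ} :
    j ∈ PeakOf A ↔ j ∈ A ∧ (∀ a ∈ A, a + 1 ≠ j) ∧ j ≠ 1 := by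
  simp only [PeakOf, Finset.mem_sdiff, Finset.mem_union, Finset.mem_image,
    Finset.mem_singleton, not_or, not_exists, not_and]

lemma Kfun_peak_insert {A : Finset ℕ} (hA : A ⊆ Finset.Icc 1 (n-1)) {i : ℕ}
    (hi : i ∈ Finset.Icc 1 (n-1)) (hiA : i ∉ A) {x : ℕ → ℕ+} (hx : x i ≠ x (i+1)) :
    Kfun n (PeakOf A) 1 x = Kfun n (PeakOf (insert i A)) 1 x := by
  classical
  have hxn : (x i : ℕ) ≠ (x (i+1) : ℕ) := fun h => hx (PNat.coe_injective h)
  have step2 : Kfun n (PeakOf A) 1 x = Kfun n ((PeakOf A).erase (i+1)) 1 x := by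
    by_cases hi1A : i + 1 ∈ A
    · have hi1 : i + 1 ∈ Finset.Icc 1 (n-1) := hA hi1A
      have hige : 1 ≤ i := (Finset.mem_Icc.1 hi).1
      have hD1 : i + 1 ∈ PeakOf A := by
        rw [mem_peakOf]
        refine ⟨hi1A, fun a ha hcontra => ?_, by omega⟩
        have : a = i := by omega
        rw [this] at ha; exact hiA ha
      have hD2 : i + 2 ∉ PeakOf A := by
        rw [mem_peakOf]
        rintro ⟨-, h2, -⟩
        exact h2 (i+1) hi1A (by omega)
      rcases lt_trichotomy (x i : ℕ) (x (i+1) : ℕ) with hlt | heqq | hgt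
      · by_cases hx2 : x (i+1) = x (i+2)
        · exact Kfun_erase_peak hi hi1 hlt hx2 hD1 hD2
        · apply Kfun_congr_D
          intro j hj
          by_cases hji1 : j = i + 1
          · right
            rw [hji1]
            rw [show i + 1 + 1 = i + 2 from by omega]
            exact hx2
          · left
            constructor
            · intro hmem; exact Finset.mem_erase.2 ⟨hji1, hmem⟩
            · intro hmem; exact Finset.mem_of_mem_erase hmem
      · exact absurd heqq hxn
      · rw [Kfun_zero_of_strict_dec x hi hgt, Kfun_zero_of_strict_dec x hi hgt]
    · have : i + 1 ∉ PeakOf A := fun h => hi1A (mem_peakOf.1 h).1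
      rw [Finset.erase_eq_of_notMem this]
  have step1 : Kfun n ((PeakOf A).erase (i+1)) 1 x = Kfun n (PeakOf (insert i A)) 1 x := by
    apply Kfun_congr_D
    intro j hj
    by_cases hji : j = i
    · right; rw [hji]; exact hx
    · left
      by_cases hji1 : j = i + 1
      · subst hji1
        constructor
        · intro hmem; exact absurd (Finset.mem_erase.1 hmem).1 (by simp)
        · intro hmem
          obtain ⟨-, h2, -⟩ := mem_peakOf.1 hmem
          exact absurd (h2 i (Finset.mem_insert_self i A)) (by simp)
      · rw [Finset.mem_erase, mem_peakOf, mem_peakOf]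
        constructor
        · rintro ⟨hne, h1, h2, h3⟩
          refine ⟨Finset.mem_insert_of_mem h1, fun a ha => ?_, h3⟩
          rcases Finset.mem_insert.1 ha with rfl | ha'
          · intro hcontra; exact hji1 hcontra.symm
          · exact h2 a ha'
        · rintro ⟨h1, h2, h3⟩
          rcases Finset.mem_insert.1 h1 with rfl | h1'
          · exact absurd rfl hji
          · exact ⟨hji1, h1', fun a ha => h2 a (Finset.mem_insert_of_mem ha), h3⟩
  rw [step2, step1]

lemma Kfun_swap {σ : Equiv.Perm ℕ} (hσ : IsPermOn n σ) {A : Finset ℕ}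
    (hA : A ⊆ Finset.Icc 1 (n-1)) {i : ℕ} (hi : i ∈ Finset.Icc 1 (n-1)) (hiA : i ∉ A)
    (u : ℕ → ℕ+) :
    Kfun n (PeakOf A) σ u + Kfun n (PeakOf (insert i A)) (σ * Equiv.swap i (i+1)) u
      = Kfun n (PeakOf A) (σ * Equiv.swap i (i+1)) u + Kfun n (PeakOf (insert i A)) σ u := by
  classical
  set τ := σ * Equiv.swap i (i+1) with hτdef
  have hin : i ∈ Finset.Icc 1 n ∧ i + 1 ∈ Finset.Icc 1 n := by
    simp only [Finset.mem_Icc] at hi ⊢; omega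
  have hτ : IsPermOn n τ := permOn_mul_swap hσ hin.1 hin.2
  have hti : τ i = σ (i+1) := by
    rw [hτdef, Equiv.Perm.mul_apply, Equiv.swap_apply_left]
  have hti1 : τ (i+1) = σ i := by
    rw [hτdef, Equiv.Perm.mul_apply, Equiv.swap_apply_right]
  have htj : ∀ j, j ≠ i → j ≠ i + 1 → τ j = σ j := by
    intro j hj1 hj2
    rw [hτdef, Equiv.Perm.mul_apply, Equiv.swap_apply_of_ne_of_ne hj1 hj2]
  rw [Kfun_reindex hσ (PeakOf A) u, Kfun_reindex hσ (PeakOf (insert i A)) u,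
    Kfun_reindex hτ (PeakOf A) u, Kfun_reindex hτ (PeakOf (insert i A)) u]
  by_cases hcase : u (σ i) = u (σ (i+1))
  · have hfun : (fun j => u (τ j)) = (fun j => u (σ j)) := by
      funext j
      by_cases hj1 : j = i
      · rw [hj1, hti, hcase]
      · by_cases hj2 : j = i + 1
        · rw [hj2, hti1, hcase]
        · rw [htj j hj1 hj2]
    rw [hfun, add_comm]
  · have h1 : Kfun n (PeakOf A) 1 (fun j => u (σ j))
        = Kfun n (PeakOf (insert i A)) 1 (fun j => u (σ j)) := by
      apply Kfun_peak_insert hA hi hiA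
      simpa using hcase
    have h2 : Kfun n (PeakOf A) 1 (fun j => u (τ j))
        = Kfun n (PeakOf (insert i A)) 1 (fun j => u (τ j)) := by
      apply Kfun_peak_insert hA hi hiA
      simp only [hti, hti1]
      exact fun h => hcase h.symm
    rw [h1, h2]
    exact add_comm _ _
end Dev5
section Dev6
variable {n : ℕ}

lemma countP_lt_succ (l : List ℕ) (b : ℕ) :
    l.countP (fun e => decide (e < b+1)) = l.countP (fun e => decide (e < b)) + l.count b := by
  induction l with
  | nil => simp
  | cons a l ih =>
    simp only [List.countP_cons, List.count_cons, ih]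
    rcases Nat.lt_trichotomy a b with h | h | h
    · have h1 : decide (a < b + 1) = true := by simp; omega
      have h2 : decide (a < b) = true := by simp; omega
      have h3 : (a == b) = false := by simp; omega
      rw [h1, h2, h3]; simp <;> omega
    · subst h
      have h1 : decide (a < a + 1) = true := by simp
      have h2 : decide (a < a) = false := by simp
      have h3 : (a == a) = true := by simp
      rw [h1, h2, h3]; simp <;> omega
    · have h1 : decide (a < b + 1) = false := by simp; omega
      have h2 : decide (a < b) = false := by simp; omega
      have h3 : (a == b) = false := by simp; omega
      rw [h1, h2, h3]; simp <;> omega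

lemma chain_sort_lt (hn : 1 ≤ n) {E : Finset ℕ} (hE : E ⊆ Finset.Icc 1 (n-1)) :
    List.Chain (· < ·) 0 ((E.sort (· ≤ ·)) ++ [n]) := by
  unfold List.Chain
  rw [List.isChain_iff_pairwise]
  have hmem : ∀ a ∈ E.sort (· ≤ ·), 1 ≤ a ∧ a ≤ n - 1 := by
    intro a ha
    have := hE ((Finset.mem_sort (α := ℕ) (· ≤ ·)).1 ha)
    simpa [Finset.mem_Icc] using this
  rw [List.pairwise_cons]
  constructor
  · intro e he
    rcases List.mem_append.1 he with h | h
    · exact lt_of_lt_of_le Nat.zero_lt_one (hmem e h).1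
    · simp only [List.mem_singleton] at h
      omega
  · rw [List.pairwise_append]
    refine ⟨List.sortedLT_iff_pairwise.1 E.sortedLT_sort, List.pairwise_singleton _ _, ?_⟩
    intro a ha b hb
    simp only [List.mem_singleton] at hb
    subst hb
    have := hmem a ha
    omega

lemma findIdx_blocks (τ : Equiv.Perm ℕ) (n' : ℕ) : ∀ (l : List ℕ) (prev a : ℕ),
    List.Chain (· < ·) prev (l ++ [n']) → prev < a → a ≤ n' →
    List.findIdx (fun B => decide (τ a ∈ B))
      (((prev :: (l ++ [n'])).zip (l ++ [n'])).map
        (fun p => (Finset.Icc (p.1 + 1) p.2).image (fun x => τ x)))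
      = l.countP (fun e => decide (e < a)) := by
  intro l
  induction l with
  | nil =>
    intro prev a hchain hpa han
    simp only [List.nil_append, List.zip_cons_cons, List.zip_nil_right, List.map_cons,
      List.map_nil, List.countP_nil]
    have hmem : τ a ∈ (Finset.Icc (prev + 1) n').image (fun x => τ x) :=
      Finset.mem_image.2 ⟨a, Finset.mem_Icc.2 ⟨by omega, han⟩, rfl⟩
    rw [List.findIdx_cons]
    simp [hmem]
  | cons c l' ih =>
    intro prev a hchain hpa han
    unfold List.Chain at hchain
    rw [List.cons_append, List.isChain_cons_cons] at hchain
    obtain ⟨hpc, hchain'⟩ := hchain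
    have hgt : ∀ e ∈ l' ++ [n'], c < e := by
      have := List.isChain_iff_pairwise.1 hchain'
      exact (List.pairwise_cons.1 this).1
    simp only [List.cons_append, List.zip_cons_cons, List.map_cons]
    by_cases hac : a ≤ c
    · have hmem : τ a ∈ (Finset.Icc (prev + 1) c).image (fun x => τ x) :=
        Finset.mem_image.2 ⟨a, Finset.mem_Icc.2 ⟨by omega, hac⟩, rfl⟩
      rw [List.findIdx_cons]
      have hc0 : (c :: l').countP (fun e => decide (e < a)) = 0 := by
        rw [List.countP_eq_zero]
        intro e he
        rcases List.mem_cons.1 he with rfl | he'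
        · simp; omega
        · have := hgt e (List.mem_append.2 (Or.inl he'))
          simp; omega
      simp [hmem, hc0]
    · push_neg at hac
      have hnmem : τ a ∉ (Finset.Icc (prev + 1) c).image (fun x => τ x) := by
        intro hm
        obtain ⟨b, hb, hbe⟩ := Finset.mem_image.1 hm
        have : b = a := τ.injective hbe
        subst this
        have := Finset.mem_Icc.1 hb
        omega
      rw [List.findIdx_cons]
      have hd : decide (τ a ∈ (Finset.Icc (prev + 1) c).image (fun x => τ x)) = false :=
        decide_eq_false hnmem
      rw [hd]
      simp only [cond_false]
      rw [ih c a hchain' hac han, List.countP_cons]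
      simp only [decide_eq_true_eq]
      rw [if_pos hac]

lemma foldr_blocks (τ : Equiv.Perm ℕ) (n' : ℕ) : ∀ (l : List ℕ) (prev : ℕ),
    List.Chain (· < ·) prev (l ++ [n']) →
    List.foldr (· ∪ ·) ∅ (((prev :: (l ++ [n'])).zip (l ++ [n'])).map
        (fun p => (Finset.Icc (p.1 + 1) p.2).image (fun x => τ x)))
      = (Finset.Icc (prev + 1) n').image (fun x => τ x) := by
  intro l
  induction l with
  | nil =>
    intro prev hchain
    simp
  | cons c l' ih =>
    intro prev hchain
    unfold List.Chain at hchain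
    rw [List.cons_append, List.isChain_cons_cons] at hchain
    obtain ⟨hpc, hchain'⟩ := hchain
    have hcn : c < n' := by
      have := List.isChain_iff_pairwise.1 hchain'
      exact (List.pairwise_cons.1 this).1 n' (List.mem_append.2 (Or.inr (by simp)))
    simp only [List.cons_append, List.zip_cons_cons, List.map_cons, List.foldr_cons]
    rw [ih c hchain']
    rw [← Finset.image_union]
    congr 1
    ext m
    simp only [Finset.mem_union, Finset.mem_Icc]
    omega
end Dev6
section Dev7
variable {n : ℕ}

lemma Mfun_eq_indicator (hn : 1 ≤ n) {E : Finset ℕ} (hE : E ⊆ Finset.Icc 1 (n-1))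
    {τ : Equiv.Perm ℕ} (hτ : IsPermOn n τ) (u : ℕ → ℕ+) :
    Mfun n E τ u = if (∀ i ∈ Finset.Icc 1 (n-1),
      (i ∈ E → u (τ i) < u (τ (i+1))) ∧ (i ∉ E → u (τ i) = u (τ (i+1)))) then 1 else 0 := by
  classical
  set l := E.sort (· ≤ ·) with hl
  have hchain := chain_sort_lt hn hE
  set cnt : ℕ → ℕ := fun a => l.countP (fun e => decide (e < a)) with hcnt
  have hcount : ∀ b, l.count b = if b ∈ E then 1 else 0 := by
    intro b
    by_cases hb : b ∈ E
    · rw [if_pos hb]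
      exact List.count_eq_one_of_mem (E.sort_nodup _) ((Finset.mem_sort _).2 hb)
    · rw [if_neg hb]
      exact List.count_eq_zero_of_not_mem (fun h => hb ((Finset.mem_sort _).1 h))
  have hcnt_succ : ∀ b, cnt (b+1) = cnt b + (if b ∈ E then 1 else 0) := by
    intro b
    rw [hcnt]
    simp only
    rw [countP_lt_succ, hcount]
  have hcnt_mono : ∀ a b, a ≤ b → cnt a ≤ cnt b := by
    intro a b hab
    apply List.countP_mono_left
    intro x _ hx
    simp only [decide_eq_true_eq] at hx ⊢
    omega
  have hfind : ∀ a, 1 ≤ a → a ≤ n →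
      List.findIdx (fun B => decide (τ a ∈ B)) (setCompBlocks n E τ) = cnt a := by
    intro a ha han
    exact findIdx_blocks τ n l 0 a hchain (by omega) han
  have hunion : (setCompBlocks n E τ).foldr (· ∪ ·) ∅ = (Finset.Icc 1 n).image (fun x => τ x) := by
    have := foldr_blocks τ n l 0 hchain
    rw [show (0:ℕ) + 1 = 1 from rfl] at this
    exact this
  set Ψ : Prop := ∀ i ∈ Finset.Icc 1 (n-1),
      (i ∈ E → u (τ i) < u (τ (i+1))) ∧ (i ∉ E → u (τ i) = u (τ (i+1))) with hΨdef
  have hclaim : Ψ → ∀ a, 1 ≤ a → ∀ d, a + d ≤ n →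
      ((u (τ a) = u (τ (a+d)) ↔ cnt a = cnt (a+d)) ∧ u (τ a) ≤ u (τ (a+d)) ∧ cnt a ≤ cnt (a+d)) := by
    intro hΨ a ha d
    induction d with
    | zero => intro _; simp
    | succ d ihd =>
      intro hle
      have hd' : a + d ≤ n := by omega
      obtain ⟨ih1, ih2, ih3⟩ := ihd hd'
      have hb : a + d ∈ Finset.Icc 1 (n-1) := by
        simp only [Finset.mem_Icc]; omega
      have hΨb := hΨ (a+d) hb
      have hidx : a + (d+1) = (a+d) + 1 := by omega
      rw [hidx]
      by_cases hbE : a + d ∈ E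
      · have hlt := hΨb.1 hbE
        have hc : cnt ((a+d)+1) = cnt (a+d) + 1 := by rw [hcnt_succ]; simp [hbE]
        have hult : u (τ a) < u (τ ((a+d)+1)) := lt_of_le_of_lt ih2 hlt
        refine ⟨iff_of_false (ne_of_lt hult) (by omega), le_of_lt hult, by omega⟩
      · have heq := hΨb.2 hbE
        have hc : cnt ((a+d)+1) = cnt (a+d) := by rw [hcnt_succ]; simp [hbE]
        rw [← heq, hc]
        exact ⟨ih1, ih2, ih3⟩
  have key_eq : Ψ → ∀ a b, 1 ≤ a → a ≤ n → 1 ≤ b → b ≤ n →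
      (u (τ a) = u (τ b) ↔ cnt a = cnt b) := by
    intro hΨ a b ha han hb hbn
    rcases le_total a b with h | h
    · have hd : b = a + (b - a) := by omega
      rw [hd]
      exact (hclaim hΨ a ha (b-a) (by omega)).1
    · have hd : a = b + (a - b) := by omega
      rw [hd]
      have := (hclaim hΨ b hb (a-b) (by omega)).1
      constructor
      · intro h'; exact (this.1 h'.symm).symm
      · intro h'; exact (this.2 h'.symm).symm
  have key_lt : Ψ → ∀ a b, 1 ≤ a → a ≤ n → 1 ≤ b → b ≤ n →
      (u (τ a) < u (τ b) ↔ cnt a < cnt b) := by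
    intro hΨ a b ha han hb hbn
    rcases le_total a b with h | h
    · have hd : b = a + (b - a) := by omega
      rw [hd]
      obtain ⟨h1, h2, h3⟩ := hclaim hΨ a ha (b-a) (by omega)
      constructor
      · intro hlt
        have : ¬ (cnt a = cnt (a + (b-a))) := fun hc => (ne_of_lt hlt) (h1.2 hc)
        omega
      · intro hc
        have : ¬ (u (τ a) = u (τ (a + (b-a)))) := fun he => by
          have := h1.1 he; omega
        exact lt_of_le_of_ne h2 this
    · have hd : a = b + (a - b) := by omega
      rw [hd]
      obtain ⟨h1, h2, h3⟩ := hclaim hΨ b hb (a-b) (by omega)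
      exact iff_of_false (fun hlt => absurd h2 (not_le_of_gt hlt)) (by omega)
  have hτmem : ∀ a, a ∈ Finset.Icc 1 n →
      τ a ∈ (setCompBlocks n E τ).foldr (· ∪ ·) ∅ := by
    intro a ha
    rw [hunion]
    exact Finset.mem_image.2 ⟨a, ha, rfl⟩
  simp only [Mfun, MfunOfComp]
  by_cases hΨ : Ψ
  · rw [if_pos hΨ, if_pos]
    intro j hj k hk
    rw [hunion] at hj hk
    obtain ⟨a, ha, rfl⟩ := Finset.mem_image.1 hj
    obtain ⟨b, hb, rfl⟩ := Finset.mem_image.1 hk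
    simp only [Finset.mem_Icc] at ha hb
    rw [hfind a ha.1 ha.2, hfind b hb.1 hb.2]
    exact ⟨key_eq hΨ a b ha.1 ha.2 hb.1 hb.2, key_lt hΨ a b ha.1 ha.2 hb.1 hb.2⟩
  · rw [if_neg hΨ, if_neg]
    intro hΦ
    apply hΨ
    intro i hi
    have hi1 : i ∈ Finset.Icc 1 n := by simp only [Finset.mem_Icc] at hi ⊢; omega
    have hi2 : i + 1 ∈ Finset.Icc 1 n := by simp only [Finset.mem_Icc] at hi ⊢; omega
    have := hΦ (τ i) (hτmem i hi1) (τ (i+1)) (hτmem (i+1) hi2)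
    simp only [Finset.mem_Icc] at hi1 hi2
    rw [hfind i hi1.1 hi1.2, hfind (i+1) hi2.1 hi2.2] at this
    constructor
    · intro hiE
      apply this.2.mpr
      rw [hcnt_succ]
      simp [hiE]
    · intro hiE
      apply this.1.mpr
      rw [hcnt_succ]
      simp [hiE]
end Dev7
section Dev8
variable {n : ℕ}

lemma Ffun_eq_sum (hn : 1 ≤ n) {C : Finset ℕ} (hC : C ⊆ Finset.Icc 1 (n-1))
    {τ : Equiv.Perm ℕ} (hτ : IsPermOn n τ) :
    Ffun n C τ = ∑ E ∈ (Finset.Icc 1 (n-1)).powerset.filter (fun E => C ⊆ E), Mfun n E τ := by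
  classical
  funext u
  rw [Finset.sum_apply, Ffun_eq_indicator hn hτ C u]
  have hterm : ∀ E ∈ (Finset.Icc 1 (n-1)).powerset.filter (fun E => C ⊆ E),
      Mfun n E τ u = if (∀ i ∈ Finset.Icc 1 (n-1),
        (i ∈ E → u (τ i) < u (τ (i+1))) ∧ (i ∉ E → u (τ i) = u (τ (i+1)))) then 1 else 0 := by
    intro E hE
    simp only [Finset.mem_filter, Finset.mem_powerset] at hE
    exact Mfun_eq_indicator hn hE.1 hτ u
  rw [Finset.sum_congr rfl hterm]
  by_cases hcond : ∀ i ∈ Finset.Icc 1 (n-1),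
      u (τ i) ≤ u (τ (i+1)) ∧ (i ∈ C → u (τ i) < u (τ (i+1)))
  · rw [if_pos hcond]
    set E₀ := (Finset.Icc 1 (n-1)).filter (fun i => u (τ i) < u (τ (i+1))) with hE₀
    have hE₀mem : E₀ ∈ (Finset.Icc 1 (n-1)).powerset.filter (fun E => C ⊆ E) := by
      simp only [Finset.mem_filter, Finset.mem_powerset]
      refine ⟨Finset.filter_subset _ _, ?_⟩
      intro i hi
      have hiIcc := hC hi
      exact Finset.mem_filter.2 ⟨hiIcc, (hcond i hiIcc).2 hi⟩
    rw [Finset.sum_eq_single E₀]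
    · rw [if_pos]
      intro i hi
      constructor
      · intro hiE
        exact (Finset.mem_filter.1 hiE).2
      · intro hiE
        have hle := (hcond i hi).1
        have hnlt : ¬ (u (τ i) < u (τ (i+1))) := fun h => hiE (Finset.mem_filter.2 ⟨hi, h⟩)
        exact le_antisymm hle (not_lt.1 hnlt)
    · intro E hE hne
      rw [if_neg]
      intro hΨ
      apply hne
      ext i
      simp only [Finset.mem_filter, Finset.mem_powerset] at hE
      constructor
      · intro hiE
        have hiIcc := hE.1 hiE
        exact Finset.mem_filter.2 ⟨hiIcc, (hΨ i hiIcc).1 hiE⟩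
      · intro hiE₀
        obtain ⟨hiIcc, hlt⟩ := Finset.mem_filter.1 hiE₀
        by_contra hiE
        exact absurd (((hΨ i hiIcc).2 hiE) ▸ hlt) (lt_irrefl _)
    · intro habs
      exact absurd hE₀mem habs
  · rw [if_neg hcond]
    symm
    apply Finset.sum_eq_zero
    intro E hE
    rw [if_neg]
    intro hΨ
    apply hcond
    simp only [Finset.mem_filter, Finset.mem_powerset] at hE
    intro i hi
    constructor
    · by_cases hiE : i ∈ E
      · exact le_of_lt ((hΨ i hi).1 hiE)
      · exact le_of_eq ((hΨ i hi).2 hiE)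
    · intro hiC
      exact (hΨ i hi).1 (hE.2 hiC)

lemma Ffun_mem_span (hn : 1 ≤ n) {C : Finset ℕ} {τ : Equiv.Perm ℕ}
    (hstd : IsStdPair n C τ) : Ffun n C τ ∈ NCQSymN n := by
  obtain ⟨hC, hτ, hdes⟩ := hstd
  rw [Ffun_eq_sum hn hC hτ]
  apply Submodule.sum_mem
  intro E hE
  apply Submodule.subset_span
  simp only [Finset.mem_filter, Finset.mem_powerset] at hE
  exact ⟨E, τ, ⟨hE.1, hτ, hdes.trans hE.2⟩, rfl⟩
end Dev8
section Dev9
variable {n : ℕ}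

noncomputable def mWeight (n : ℕ) (σ : Equiv.Perm ℕ) : ℕ := ∑ j ∈ Finset.Icc 1 n, j * σ j

lemma mWeight_le (hn : 1 ≤ n) {σ : Equiv.Perm ℕ} (hσ : IsPermOn n σ) :
    mWeight n σ ≤ n * n * n := by
  have h1 : ∀ j ∈ Finset.Icc 1 n, j * σ j ≤ n * n := by
    intro j hj
    have h2 := permOn_mem hσ hj
    simp only [Finset.mem_Icc] at hj h2
    exact Nat.mul_le_mul hj.2 h2.2
  calc mWeight n σ ≤ ∑ _j ∈ Finset.Icc 1 n, n * n := Finset.sum_le_sum h1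
    _ = n * (n * n) := by
        rw [Finset.sum_const, Nat.card_Icc, smul_eq_mul]
        have h : n + 1 - 1 = n := by omega
        rw [h]
    _ = n * n * n := by ring

lemma mWeight_lt_swap {σ : Equiv.Perm ℕ} {i : ℕ}
    (hi : i ∈ Finset.Icc 1 (n-1)) (hdesc : σ (i+1) < σ i) :
    mWeight n σ < mWeight n (σ * Equiv.swap i (i+1)) := by
  classical
  set τ := σ * Equiv.swap i (i+1) with hτdef
  have hti : τ i = σ (i+1) := by
    rw [hτdef, Equiv.Perm.mul_apply, Equiv.swap_apply_left]
  have hti1 : τ (i+1) = σ i := by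
    rw [hτdef, Equiv.Perm.mul_apply, Equiv.swap_apply_right]
  have htj : ∀ j, j ≠ i → j ≠ i + 1 → τ j = σ j := by
    intro j hj1 hj2
    rw [hτdef, Equiv.Perm.mul_apply, Equiv.swap_apply_of_ne_of_ne hj1 hj2]
  have hmi : i ∈ Finset.Icc 1 n := by simp only [Finset.mem_Icc] at hi ⊢; omega
  have hmi1 : i + 1 ∈ (Finset.Icc 1 n).erase i := by
    simp only [Finset.mem_erase, Finset.mem_Icc] at hi ⊢
    omega
  have hsplit : ∀ g : ℕ → ℕ, ∑ j ∈ Finset.Icc 1 n, g j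
      = g i + (g (i+1) + ∑ j ∈ ((Finset.Icc 1 n).erase i).erase (i+1), g j) := by
    intro g
    rw [← Finset.add_sum_erase _ g hmi, ← Finset.add_sum_erase _ g hmi1]
  have hrest : ∑ j ∈ ((Finset.Icc 1 n).erase i).erase (i+1), (fun j => j * τ j) j
      = ∑ j ∈ ((Finset.Icc 1 n).erase i).erase (i+1), (fun j => j * σ j) j := by
    apply Finset.sum_congr rfl
    intro j hj
    simp only [Finset.mem_erase] at hj
    show j * τ j = j * σ j
    rw [htj j hj.2.1 hj.1]
  simp only [mWeight]
  rw [hsplit (fun j => j * σ j), hsplit (fun j => j * τ j), hrest, hti, hti1]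
  simp only
  have e1 : (i+1) * σ (i+1) = i * σ (i+1) + σ (i+1) := by ring
  have e2 : (i+1) * σ i = i * σ i + σ i := by ring
  rw [e1, e2]
  set p := i * σ i
  set q := i * σ (i+1)
  omega

lemma main_induction (hn : 1 ≤ n)
    (Θ : ↥(NCQSymN n) →ₗ[ℚ] ((ℕ → ℕ+) → ℚ))
    (hΘ : ∀ (C : Finset ℕ) (τ : Equiv.Perm ℕ), IsStdPair n C τ →
      ∀ h : Ffun n C τ ∈ NCQSymN n, Θ ⟨Ffun n C τ, h⟩ = Kfun n (PeakOf C) τ) :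
    ∀ (N : ℕ) (A : Finset ℕ) (σ : Equiv.Perm ℕ),
      (n*n*n - mWeight n σ) * n + (n - A.card) ≤ N →
      A ⊆ Finset.Icc 1 (n-1) → IsPermOn n σ →
      Ffun n A σ ∈ NCQSymN n ∧
        ∀ h : Ffun n A σ ∈ NCQSymN n, Θ ⟨Ffun n A σ, h⟩ = Kfun n (PeakOf A) σ := by
  intro N
  induction N using Nat.strong_induction_on with
  | _ N IH =>
  intro A σ hμ hA hσ
  by_cases hdes : DesSet n σ ⊆ A
  · have hstd : IsStdPair n A σ := ⟨hA, hσ, hdes⟩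
    exact ⟨Ffun_mem_span hn hstd, fun h => hΘ A σ hstd h⟩
  · obtain ⟨i, hiDes, hiA⟩ := Finset.not_subset.1 hdes
    have hiIcc : i ∈ Finset.Icc 1 (n-1) := (Finset.mem_filter.1 hiDes).1
    have hdesc : σ (i+1) < σ i := (Finset.mem_filter.1 hiDes).2
    set τ := σ * Equiv.swap i (i+1) with hτdef
    set A' := insert i A with hA'def
    have hin : i ∈ Finset.Icc 1 n ∧ i + 1 ∈ Finset.Icc 1 n := by
      simp only [Finset.mem_Icc] at hiIcc ⊢; omega
    have hτ : IsPermOn n τ := permOn_mul_swap hσ hin.1 hin.2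
    have hA' : A' ⊆ Finset.Icc 1 (n-1) := Finset.insert_subset hiIcc hA
    -- measure facts
    have hmσ := mWeight_le hn hσ
    have hmτ := mWeight_le hn hτ
    have hmlt : mWeight n σ < mWeight n τ := mWeight_lt_swap hiIcc hdesc
    have hcardA : A.card ≤ n - 1 := by
      have := Finset.card_le_card hA
      simpa [Nat.card_Icc] using this
    have hcardA' : A'.card = A.card + 1 := Finset.card_insert_of_notMem hiA
    set a := n*n*n - mWeight n τ with ha
    set b := n*n*n - mWeight n σ with hb
    have hab : a + 1 ≤ b := by omega
    have hmul : (a + 1) * n ≤ b * n := Nat.mul_le_mul_right n hab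
    have hmul' : a * n + n ≤ b * n := by
      have : (a+1) * n = a * n + n := by ring
      omega
    have hμ1 : a * n + (n - A.card) < N := by omega
    have hμ2 : a * n + (n - A'.card) < N := by omega
    have hμ3 : b * n + (n - A'.card) < N := by omega
    obtain ⟨mem1, val1⟩ := IH (b * n + (n - A'.card)) hμ3 A' σ le_rfl hA' hσ
    obtain ⟨mem2, val2⟩ := IH (a * n + (n - A.card)) hμ1 A τ le_rfl hA hτ
    obtain ⟨mem3, val3⟩ := IH (a * n + (n - A'.card)) hμ2 A' τ le_rfl hA' hτ
    have hFid : Ffun n A σ = Ffun n A' σ + Ffun n A τ - Ffun n A' τ := by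
      funext u
      have := Ffun_swap hn hσ hiIcc hiA u
      simp only [Pi.add_apply, Pi.sub_apply]
      rw [hA'def]
      linarith
    have hmem : Ffun n A σ ∈ NCQSymN n := by
      rw [hFid]
      exact Submodule.sub_mem _ (Submodule.add_mem _ mem1 mem2) mem3
    refine ⟨hmem, fun h => ?_⟩
    have hsub : (⟨Ffun n A σ, h⟩ : NCQSymN n)
        = ⟨Ffun n A' σ, mem1⟩ + ⟨Ffun n A τ, mem2⟩ - ⟨Ffun n A' τ, mem3⟩ := by
      apply Subtype.ext
      simp only [Submodule.coe_add, Submodule.coe_sub]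
      exact hFid
    rw [hsub, map_sub, map_add, val1, val2, val3]
    funext u
    have := Kfun_swap hσ hA hiIcc hiA u
    simp only [Pi.add_apply, Pi.sub_apply]
    rw [hA'def]
    linarith
end Dev9
/-- If a `ℚ`-linear map `Θ : V_n → W` satisfies `Θ(F_{(C,τ)}) = K_{(Peak C,τ)}` for all
standard pairs `(C,τ)`, then `Θ(F_{(A,σ)}) = K_{(Peak A,σ)}` for every `A ⊆ [n−1]` and
every permutation `σ` of `[n]`, not necessarily standard. -/
theorem stmt12 (n : ℕ) (hn : 1 ≤ n)
    (Θ : ↥(NCQSymN n) →ₗ[ℚ] ((ℕ → ℕ+) → ℚ))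
    (hΘ : ∀ (C : Finset ℕ) (τ : Equiv.Perm ℕ), IsStdPair n C τ →
      ∀ h : Ffun n C τ ∈ NCQSymN n, Θ ⟨Ffun n C τ, h⟩ = Kfun n (PeakOf C) τ) :
    ∀ (A : Finset ℕ) (σ : Equiv.Perm ℕ), A ⊆ Finset.Icc 1 (n - 1) → IsPermOn n σ →
      ∀ h : Ffun n A σ ∈ NCQSymN n, Θ ⟨Ffun n A σ, h⟩ = Kfun n (PeakOf A) σ := by
  intro A σ hA hσ h
  exact (main_induction hn Θ hΘ ((n*n*n - mWeight n σ) * n + (n - A.card)) A σ le_rfl hA hσ).2 h
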